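/- arXiv:1807.07091 — 2 statements merged into one kernel-verified Lean document; each statement's English description precedes it below -/
import Mathlib

section
/- Let A be a PTA and let (l, C) be a symbolic state reached by a symbolic run of A. Then for any successor (l', C') of (l, C) in the parametric zone graph, the projection onto the parameters satisfies C'↓P ⊆ C↓P, i.e., every parameter valuation satisfying C'↓P also satisfies C↓P. -/
namespace PTAPaper

/-- Comparison operators `<, ≤, =, ≥, >`. -/
inductive Cmp : Type
  | lt
  | le
  | eq
  | ge
  | gt

/-- Semantics of a comparison operator on the reals. -/
def Cmp.holds : Cmp → ℝ → ℝ → Prop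
  | .lt, a, b => a < b
  | .le, a, b => a ≤ b
  | .eq, a, b => a = b
  | .ge, a, b => b ≤ a
  | .gt, a, b => b < a

/-- Atomic constraints over clocks `X` and parameters `P`:
`x ⋈ p + c`, `x ⋈ c`, `p ⋈ c`, and (diagonal) `x - x' ⋈ c`. -/
inductive Atom (X P : Type) : Type
  | clkParam : X → Cmp → P → ℤ → Atom X P
  | clkConst : X → Cmp → ℤ → Atom X P
  | paramConst : P → Cmp → ℤ → Atom X P
  | diag : X → X → Cmp → ℤ → Atom X P

/-- A constraint is a (finite) conjunction of atomic constraints. -/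
abbrev Constraint (X P : Type) := List (Atom X P)

/-- Satisfaction of an atomic constraint by a clock valuation `w` and a
(real-valued) parameter valuation `ρ`. -/
def Atom.sat {X P : Type} (w : X → ℝ) (ρ : P → ℝ) : Atom X P → Prop
  | .clkParam x op p c => op.holds (w x) (ρ p + (c : ℝ))
  | .clkConst x op c => op.holds (w x) (c : ℝ)
  | .paramConst p op c => op.holds (ρ p) (c : ℝ)
  | .diag x y op c => op.holds (w x - w y) (c : ℝ)

def Constraint.sat {X P : Type} (w : X → ℝ) (ρ : P → ℝ) (g : Constraint X P) : Prop :=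
  ∀ a ∈ g, a.sat w ρ

/-- An edge of a PTA: source location, guard, action, set of clocks to reset
(as a Boolean predicate), and target location. -/
structure Edge (σ L X P : Type) : Type where
  src : L
  guard : Constraint X P
  act : σ
  reset : X → Bool
  dst : L

/-- A parametric timed automaton over actions `σ`, locations `L`, clocks `X`
and parameters `P`: an initial location, invariants, and a finite list of edges. -/
structure PTA (σ L X P : Type) : Type where
  init : L
  inv : L → Constraint X P
  edges : List (Edge σ L X P)

/-- Plain (non-diagonal) atomic constraints. -/
def Atom.IsPlain {X P : Type} : Atom X P → Prop
  | .diag _ _ _ _ => False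
  | _ => True

/-- A PTA whose guards and invariants contain no diagonal constraints
(as in the standard definition of PTA). -/
def PTA.NoDiag {σ L X P : Type} (A : PTA σ L X P) : Prop :=
  (∀ l, ∀ a ∈ A.inv l, a.IsPlain) ∧ (∀ e ∈ A.edges, ∀ a ∈ e.guard, a.IsPlain)

/-- The real-valued parameter valuation induced by a rational-valued one. -/
def pval {P : Type} (v : P → ℚ) : P → ℝ := fun p => (v p : ℝ)

/-- Nonnegative (i.e. well-formed) parameter valuations. -/
def Nonneg {P : Type} (v : P → ℚ) : Prop := ∀ p, 0 ≤ v p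

/-- Integer-valued parameter valuations. -/
def IntVal {P : Type} (v : P → ℚ) : Prop := ∀ p, ∃ n : ℤ, v p = (n : ℚ)

/-- Resetting the clocks selected by `r` to `0`. -/
def resetClocks {X : Type} (r : X → Bool) (w : X → ℝ) : X → ℝ :=
  fun x => if r x then 0 else w x

/-- A (semantic) zone: a set of valuations of the clocks and the parameters. -/
abbrev Zone (X P : Type) := Set ((X → ℝ) × (P → ℝ))

/-- Projection of a zone onto the parameters. -/
def Zone.projP {X P : Type} (Z : Zone X P) : Set (P → ℝ) := {ρ | ∃ w, (w, ρ) ∈ Z}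

/-- Time elapsing of a zone. -/
def Zone.elapse {X P : Type} (Z : Zone X P) : Zone X P :=
  {wρ | ∃ w d, 0 ≤ d ∧ (w, wρ.2) ∈ Z ∧ wρ.1 = fun x => w x + d}

/-- Resetting in a zone the clocks selected by `r`. -/
def Zone.reset {X P : Type} (r : X → Bool) (Z : Zone X P) : Zone X P :=
  {wρ | ∃ w, (w, wρ.2) ∈ Z ∧ wρ.1 = resetClocks r w}

/-- The zone defined by a constraint. -/
def constrZone {X P : Type} (g : Constraint X P) : Zone X P :=
  {wρ | Constraint.sat wρ.1 wρ.2 g}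

/-- A symbolic state: a location together with a zone. -/
abbrev SymState (L X P : Type) := L × Zone X P

/-- The initial symbolic state `(l₀, (X = 0)↗ ∧ I(l₀))`. -/
def initSym {σ L X P : Type} (A : PTA σ L X P) : SymState L X P :=
  (A.init, Zone.elapse {wρ | wρ.1 = fun _ => 0} ∩ constrZone (A.inv A.init))

/-- Successor of a symbolic state via some edge:
`(l', ((C ∧ g)[R←0])↗ ∧ I(l'))`, when nonempty. -/
def SymSucc {σ L X P : Type} (A : PTA σ L X P) (s s' : SymState L X P) : Prop :=
  ∃ e ∈ A.edges, e.src = s.1 ∧ s'.1 = e.dst ∧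
    s'.2 = Zone.elapse (Zone.reset e.reset (s.2 ∩ constrZone e.guard)) ∩
        constrZone (A.inv e.dst) ∧
    s'.2.Nonempty

/-- Symbolic states reachable in the parametric zone graph. -/
inductive SymReach {σ L X P : Type} (A : PTA σ L X P) : SymState L X P → Prop
  | init : SymReach A (initSym A)
  | succ {s s' : SymState L X P} : SymReach A s → SymSucc A s s' → SymReach A s'

/-- **Parameter projections shrink along symbolic runs** (Lemma 16). If `(l, C)`
is a reachable symbolic state of the PTA `A` and `(l', C')` is a successor of
`(l, C)` in the parametric zone graph, then `C'↓P ⊆ C↓P`. -/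
theorem projP_antitone_along_symbolic_runs {σ L X P : Type}
    (A : PTA σ L X P) (hA : A.NoDiag) {s s' : SymState L X P}
    (hreach : SymReach A s) (hsucc : SymSucc A s s') :
    Zone.projP s'.2 ⊆ Zone.projP s.2 := by
  obtain ⟨e, he, hsrc, hdst, hz, hne⟩ := hsucc
  intro ρ hρ
  obtain ⟨w, hw⟩ := hρ
  rw [hz] at hw
  obtain ⟨⟨w0, d, hd, hw0, _⟩, _⟩ := hw
  obtain ⟨w1, ⟨hw1C, _⟩, _⟩ := hw0
  exact ⟨w1, hw1C⟩

end PTAPaper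
end

section
/- Let A be an extended 1-clock PTA (1cPTA). Then every reachable symbolic state (l, C) of A satisfies C ∈ 1CSC(A), i.e., C is a conjunction of constraints of the form lt ⋈ x and lt¹ ⋈ lt² where x is the unique clock and lt, lt¹, lt² are parametric linear terms appearing in guards or invariants of A or equal to 0. -/
namespace PTAPaper

/-- A parametric linear term `Σᵢ αᵢ pᵢ + c` over parameters `P`. -/
structure LinTerm (P : Type) : Type where
  coef : P → ℤ
  const : ℤ

/-- Evaluation of a parametric linear term at a parameter valuation. -/
def LinTerm.eval {P : Type} [Fintype P] (t : LinTerm P) (ρ : P → ℝ) : ℝ :=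
  (∑ p, (t.coef p : ℝ) * ρ p) + (t.const : ℝ)

/-- The zero linear term. -/
def zeroTerm (P : Type) : LinTerm P := ⟨fun _ => 0, 0⟩

/-- A guard or invariant of an extended 1-clock PTA: a conjunction of
constraints `x ⋈ lt` on the (unique) clock `x`. -/
abbrev OCConstraint (P : Type) := List (Cmp × LinTerm P)

def OCConstraint.sat {P : Type} [Fintype P] (x : ℝ) (ρ : P → ℝ)
    (g : OCConstraint P) : Prop :=
  ∀ a ∈ g, a.1.holds x (a.2.eval ρ)

/-- An edge of an extended 1-clock PTA; `reset` tells whether the clock is reset. -/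
structure OCEdge (σ L P : Type) : Type where
  src : L
  guard : OCConstraint P
  act : σ
  reset : Bool
  dst : L

/-- An extended 1-clock PTA (1cPTA): a PTA with a single clock, whose guards
and invariants compare the clock with parametric linear terms. -/
structure OCPTA (σ L P : Type) : Type where
  init : L
  inv : L → OCConstraint P
  edges : List (OCEdge σ L P)

/-- The parametric linear terms occurring in the guards and invariants of `A`. -/
def OCPTA.terms {σ L P : Type} (A : OCPTA σ L P) : Set (LinTerm P) :=
  {t | (∃ l, ∃ a ∈ A.inv l, a.2 = t) ∨ (∃ e ∈ A.edges, ∃ a ∈ e.guard, a.2 = t)}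

/-- A (semantic) zone over the single clock and the parameters. -/
abbrev Zone1 (P : Type) := Set (ℝ × (P → ℝ))

/-- Projection of a zone onto the parameters. -/
def Zone1.projP {P : Type} (Z : Zone1 P) : Set (P → ℝ) := {ρ | ∃ x, (x, ρ) ∈ Z}

/-- Time elapsing of a zone. -/
def Zone1.elapse {P : Type} (Z : Zone1 P) : Zone1 P :=
  {xρ | ∃ x d, 0 ≤ d ∧ (x, xρ.2) ∈ Z ∧ xρ.1 = x + d}

/-- Resetting the clock in a zone (when `b = true`). -/
def Zone1.reset {P : Type} (b : Bool) (Z : Zone1 P) : Zone1 P :=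
  if b then {xρ | ∃ x, (x, xρ.2) ∈ Z ∧ xρ.1 = 0} else Z

/-- The zone defined by a constraint. -/
def ocZone {P : Type} [Fintype P] (g : OCConstraint P) : Zone1 P :=
  {xρ | OCConstraint.sat xρ.1 xρ.2 g}

/-- The initial symbolic state `(l₀, (x = 0)↗ ∧ I(l₀))`. -/
def initSym1 {σ L P : Type} [Fintype P] (A : OCPTA σ L P) : L × Zone1 P :=
  (A.init, Zone1.elapse {xρ | xρ.1 = 0} ∩ ocZone (A.inv A.init))

/-- Successor of a symbolic state via some edge:
`(l', ((C ∧ g)[R←0])↗ ∧ I(l'))`, when nonempty. -/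
def OCSucc {σ L P : Type} [Fintype P] (A : OCPTA σ L P)
    (s s' : L × Zone1 P) : Prop :=
  ∃ e ∈ A.edges, e.src = s.1 ∧ s'.1 = e.dst ∧
    s'.2 = Zone1.elapse (Zone1.reset e.reset (s.2 ∩ ocZone e.guard)) ∩
        ocZone (A.inv e.dst) ∧
    s'.2.Nonempty

/-- The reachable symbolic states of the parametric zone graph of `A`
(symbolic states with the same location and the same set of satisfying
valuations are identified). -/
inductive OCReach {σ L P : Type} [Fintype P] (A : OCPTA σ L P) :
    (L × Zone1 P) → Prop
  | init : OCReach A (initSym1 A)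
  | succ {s s' : L × Zone1 P} : OCReach A s → OCSucc A s s' → OCReach A s'

/-- `Z` is (defined by) a 1-clock symbolic constraint of `A`: a conjunction
`⋀ᵢ (ltᵢ ⋈ x) ∧ ⋀ⱼ (lt¹ⱼ ⋈ lt²ⱼ)` whose parametric linear terms appear in the
guards and invariants of `A` or are equal to `0`, where the `lt¹ⱼ, lt²ⱼ` are
all different from each other. -/
def In1CSC {σ L P : Type} [Fintype P] (A : OCPTA σ L P) (Z : Zone1 P) : Prop :=
  ∃ (clkAtoms : List (LinTerm P × Cmp)) (parAtoms : List (LinTerm P × Cmp × LinTerm P)),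
    (∀ a ∈ clkAtoms, a.1 ∈ insert (zeroTerm P) A.terms) ∧
    (∀ a ∈ parAtoms, a.1 ∈ insert (zeroTerm P) A.terms ∧
        a.2.2 ∈ insert (zeroTerm P) A.terms ∧ a.1 ≠ a.2.2) ∧
    (parAtoms.map (fun a => (a.1, a.2.2))).Pairwise (· ≠ ·) ∧
    Z = {xρ | (∀ a ∈ clkAtoms, a.2.holds (a.1.eval xρ.2) xρ.1) ∧
              (∀ a ∈ parAtoms, a.2.1.holds (a.1.eval xρ.2) (a.2.2.eval xρ.2))}

/-!
Every reachable zone is a conjunction of atoms `t ⋈ x` and `t₁ ⋈ t₂` whose terms occur in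
`A` or are `0`. Intersecting with guards and invariants preserves this; reset and time
elapsing both eliminate one real variable from such a conjunction. By Helly's theorem on the
line, finitely many half-lines and points have a common point iff any two of them do, and each
pairwise condition `∃ y, t ⋈ y ∧ t' ⋈' y` is a single comparison between `t` and `t'` (or is
trivial). Finally the parameter atoms are normalised: two comparisons of the same pair of terms
merge into one or make the zone empty (and `∅` is `0 < x ∧ x < 0`), and a comparison of a term
with itself is either trivial or makes the zone empty.
-/

namespace Cmp

def flip : Cmp → Cmp
  | .lt => .gt | .le => .ge | .eq => .eq | .ge => .le | .gt => .lt

theorem holds_flip (c : Cmp) (a b : ℝ) : c.flip.holds a b ↔ c.holds b a := by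
  cases c <;> simp [holds, flip, eq_comm]

/-- `none` when the conjunction of the two comparisons is unsatisfiable. -/
def meet : Cmp → Cmp → Option Cmp
  | .lt, .lt | .lt, .le | .le, .lt => some .lt
  | .le, .le => some .le
  | .le, .eq | .eq, .le | .le, .ge | .ge, .le | .eq, .eq | .eq, .ge | .ge, .eq => some .eq
  | .ge, .ge => some .ge
  | .ge, .gt | .gt, .ge | .gt, .gt => some .gt
  | _, _ => none

theorem holds_and_holds_iff (c d : Cmp) (a b : ℝ) :
    c.holds a b ∧ d.holds a b ↔ ∃ e ∈ c.meet d, e.holds a b := by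
  cases c <;> cases d <;>
    simp only [meet, holds, Option.mem_def, reduceCtorEq, false_and, Option.some.injEq] <;> grind

/-- The comparison between `a` and `b` equivalent to `∃ x, c.holds a x ∧ d.holds b x`;
`none` when that condition always holds. -/
def eliminate : Cmp → Cmp → Option Cmp
  | .lt, .eq | .lt, .ge | .lt, .gt | .le, .gt | .eq, .gt => some .lt
  | .le, .eq | .le, .ge | .eq, .ge => some .le
  | .eq, .eq => some .eq
  | .eq, .le | .ge, .le | .ge, .eq => some .ge
  | .eq, .lt | .ge, .lt | .gt, .lt | .gt, .le | .gt, .eq => some .gt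
  | _, _ => none

theorem exists_holds_and_holds_iff (c d : Cmp) (a b : ℝ) :
    (∃ x, c.holds a x ∧ d.holds b x) ↔ ∀ e ∈ c.eliminate d, e.holds a b := by
  cases c <;> cases d <;>
    simp only [eliminate, holds, Option.mem_def, reduceCtorEq, forall_eq', Option.some.injEq,
      IsEmpty.forall_iff, implies_true, iff_true] <;>
    first
    | (refine ⟨max a b + 1, ?_, ?_⟩ <;> grind)
    | (refine ⟨min a b - 1, ?_, ?_⟩ <;> grind)
    | (constructor
       · rintro ⟨x, h₁, h₂⟩
         grind
       · intro h
         first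
         | (refine ⟨a, ?_, ?_⟩ <;> grind)
         | (refine ⟨b, ?_, ?_⟩ <;> grind)
         | (refine ⟨(a + b) / 2, ?_, ?_⟩ <;> grind))

theorem convex_setOf_holds (c : Cmp) (a : ℝ) : Convex ℝ {x | c.holds a x} := by
  cases c
  exacts [convex_Ioi a, convex_Ici a, (by simp [holds]), convex_Iic a, convex_Iio a]

theorem holds_self (c : Cmp) : (∀ a, c.holds a a) ∨ ∀ a, ¬ c.holds a a := by
  cases c <;> simp [holds]

end Cmp

theorem exists_forall_mem_iff_pairwise_of_convex {S : List (Set ℝ)}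
    (hS : ∀ s ∈ S, Convex ℝ s) :
    (∃ x, ∀ s ∈ S, x ∈ s) ↔ ∀ s ∈ S, ∀ t ∈ S, (s ∩ t).Nonempty := by
  classical
  refine ⟨fun ⟨x, hx⟩ s hs t ht => ⟨x, hx s hs, hx t ht⟩, fun h => ?_⟩
  have key := Convex.helly_theorem' (𝕜 := ℝ) (F := id) (s := S.toFinset)
    (by simpa using hS) ?_
  · obtain ⟨x, hx⟩ := key
    exact ⟨x, by simpa using hx⟩
  intro I hI hcard
  rw [Module.finrank_self] at hcard
  have hI' : ∀ s ∈ I, s ∈ S := fun s hs => List.mem_toFinset.1 (hI hs)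
  interval_cases hn : I.card
  · simp [Finset.card_eq_zero.1 hn]
  · obtain ⟨s, rfl⟩ := Finset.card_eq_one.1 hn
    have hs := hI' s (by simp)
    simpa using h s hs s hs
  · obtain ⟨s, t, -, rfl⟩ := Finset.card_eq_two.1 hn
    simpa using h s (hI' s (by simp)) t (hI' t (by simp))

section Atoms

variable {α : Type*}

def ClockSat (f : α → ℝ) (x : ℝ) (clk : List (α × Cmp)) : Prop :=
  ∀ a ∈ clk, a.2.holds (f a.1) x

def ParamSat (f : α → ℝ) (par : List (α × Cmp × α)) : Prop :=
  ∀ a ∈ par, a.2.1.holds (f a.1) (f a.2.2)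

theorem paramSat_append {f : α → ℝ} {par₁ par₂ : List (α × Cmp × α)} :
    ParamSat f (par₁ ++ par₂) ↔ ParamSat f par₁ ∧ ParamSat f par₂ :=
  List.forall_mem_append

theorem clockSat_append {f : α → ℝ} {x : ℝ} {clk₁ clk₂ : List (α × Cmp)} :
    ClockSat f x (clk₁ ++ clk₂) ↔ ClockSat f x clk₁ ∧ ClockSat f x clk₂ :=
  List.forall_mem_append

def eliminationAtoms (clk : List (α × Cmp)) : List (α × Cmp × α) :=
  clk.flatMap fun a => clk.filterMap fun b => (a.2.eliminate b.2).map fun e => (a.1, e, b.1)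

def elapseAtoms (clk : List (α × Cmp)) : List (α × Cmp) :=
  clk.filterMap fun a => (a.2.eliminate .ge).map (a.1, ·)

theorem eliminationAtoms_terms_mem {T : Set α} {clk : List (α × Cmp)}
    (h : ∀ a ∈ clk, a.1 ∈ T) :
    ∀ a ∈ eliminationAtoms clk, a.1 ∈ T ∧ a.2.2 ∈ T := by
  simp only [eliminationAtoms, List.mem_flatMap, List.mem_filterMap, Option.map_eq_some_iff]
  rintro _ ⟨a, ha, b, hb, e, -, rfl⟩
  exact ⟨h a ha, h b hb⟩

theorem elapseAtoms_terms_mem {T : Set α} {clk : List (α × Cmp)} (h : ∀ a ∈ clk, a.1 ∈ T) :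
    ∀ a ∈ elapseAtoms clk, a.1 ∈ T := by
  simp only [elapseAtoms, List.mem_filterMap, Option.map_eq_some_iff]
  rintro _ ⟨a, ha, e, -, rfl⟩
  exact h a ha

theorem paramSat_eliminationAtoms_iff (f : α → ℝ) (clk : List (α × Cmp)) :
    ParamSat f (eliminationAtoms clk) ↔
      ∀ a ∈ clk, ∀ b ∈ clk, ∃ x, a.2.holds (f a.1) x ∧ b.2.holds (f b.1) x := by
  simp only [ParamSat, eliminationAtoms, List.mem_flatMap, List.mem_filterMap,
    Option.map_eq_some_iff, Cmp.exists_holds_and_holds_iff, Option.mem_def]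
  constructor
  · intro h a ha b hb e he
    exact h _ ⟨a, ha, b, hb, e, he, rfl⟩
  · rintro h _ ⟨a, ha, b, hb, e, he, rfl⟩
    exact h a ha b hb e he

theorem clockSat_elapseAtoms_iff (f : α → ℝ) (x : ℝ) (clk : List (α × Cmp)) :
    ClockSat f x (elapseAtoms clk) ↔ ∀ a ∈ clk, ∃ y ≤ x, a.2.holds (f a.1) y := by
  simp only [ClockSat, elapseAtoms, List.mem_filterMap, Option.map_eq_some_iff]
  have key (c : Cmp) (u : ℝ) :
      (∃ y ≤ x, c.holds u y) ↔ ∀ e ∈ c.eliminate .ge, e.holds u x := by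
    rw [← Cmp.exists_holds_and_holds_iff]
    exact exists_congr fun y => and_comm
  simp only [key, Option.mem_def]
  constructor
  · intro h a ha e he
    exact h _ ⟨a, ha, e, he, rfl⟩
  · rintro h _ ⟨a, ha, e, he, rfl⟩
    exact h a ha e he

theorem exists_clockSat_iff (f : α → ℝ) (clk : List (α × Cmp)) :
    (∃ x, ClockSat f x clk) ↔ ParamSat f (eliminationAtoms clk) := by
  rw [paramSat_eliminationAtoms_iff]
  have helly := exists_forall_mem_iff_pairwise_of_convex
    (S := clk.map fun a => {x | a.2.holds (f a.1) x})
    (List.forall_mem_map.2 fun a _ => Cmp.convex_setOf_holds _ _)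
  simp only [List.forall_mem_map] at helly
  exact helly

theorem exists_le_clockSat_iff (f : α → ℝ) (x : ℝ) (clk : List (α × Cmp)) :
    (∃ y ≤ x, ClockSat f y clk) ↔
      ClockSat f x (elapseAtoms clk) ∧ ParamSat f (eliminationAtoms clk) := by
  rw [paramSat_eliminationAtoms_iff, clockSat_elapseAtoms_iff]
  have helly := exists_forall_mem_iff_pairwise_of_convex
    (S := Set.Iic x :: clk.map fun a => {x | a.2.holds (f a.1) x})
    (List.forall_mem_cons.2
      ⟨convex_Iic x, List.forall_mem_map.2 fun a _ => Cmp.convex_setOf_holds _ _⟩)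
  simp only [List.forall_mem_cons, List.forall_mem_map, Set.mem_Iic] at helly
  refine helly.trans ?_
  simp only [Set.inter_self, Set.Nonempty, Set.mem_inter_iff, Set.mem_Iic, imp_and, forall_and]
  constructor
  · rintro ⟨⟨-, h₁⟩, -, h₂⟩
    exact ⟨h₁, h₂⟩
  · rintro ⟨h₁, h₂⟩
    exact ⟨⟨⟨x, le_rfl⟩, h₁⟩, fun a ha => (h₁ a ha).imp fun y => And.symm, h₂⟩

end Atoms

section Normalize

variable {α : Type*}

theorem paramSat_cons {f : α → ℝ} {a : α × Cmp × α} {par : List (α × Cmp × α)} :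
    ParamSat f (a :: par) ↔ a.2.1.holds (f a.1) (f a.2.2) ∧ ParamSat f par :=
  List.forall_mem_cons

theorem paramSat_iff_of_perm {f : α → ℝ} {par par' : List (α × Cmp × α)}
    (h : par.Perm par') :
    ParamSat f par ↔ ParamSat f par' := by
  simp only [ParamSat, h.mem_iff]

def IsNormalOver (T : Set α) (par : List (α × Cmp × α)) : Prop :=
  (∀ a ∈ par, a.1 ∈ T ∧ a.2.2 ∈ T ∧ a.1 ≠ a.2.2) ∧
    (par.map fun a => (a.1, a.2.2)).Pairwise (· ≠ ·)

theorem IsNormalOver.exists_cons_or_unsat {T : Set α} {a : α × Cmp × α}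
    {par : List (α × Cmp × α)} (ha : a.1 ∈ T ∧ a.2.2 ∈ T) (hpar : IsNormalOver T par) :
    (∀ f, ¬ ParamSat f (a :: par)) ∨
      ∃ par', IsNormalOver T par' ∧ ∀ f, ParamSat f par' ↔ ParamSat f (a :: par) := by
  classical
  obtain ⟨t, c, t'⟩ := a
  by_cases hdiag : t = t'
  · subst hdiag
    rcases c.holds_self with hc | hc
    · exact .inr ⟨par, hpar, fun f => by simp [paramSat_cons, hc]⟩
    · exact .inl fun f h => hc _ (paramSat_cons.1 h).1
  by_cases hkey : ∃ b ∈ par, b.1 = t ∧ b.2.2 = t'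
  · obtain ⟨b, hb, rfl, rfl⟩ := hkey
    have hperm := List.perm_cons_erase hb
    have hnodup : ((b.1, b.2.2) :: (par.erase b).map fun a => (a.1, a.2.2)).Nodup :=
      (hperm.map _).nodup_iff.1 hpar.2
    cases hm : c.meet b.2.1 with
    | none =>
      refine .inl fun f h => ?_
      obtain ⟨e, he, -⟩ := (c.holds_and_holds_iff b.2.1 _ _).1
        ⟨(paramSat_cons.1 h).1, (paramSat_cons.1 h).2 b hb⟩
      simp [hm] at he
    | some e =>
      refine .inr ⟨(b.1, e, b.2.2) :: par.erase b, ⟨?_, hnodup⟩, fun f => ?_⟩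
      · simp only [List.forall_mem_cons]
        exact ⟨⟨ha.1, ha.2, hdiag⟩, fun a h => hpar.1 a ((List.erase_subset) h)⟩
      · rw [paramSat_cons, paramSat_cons, paramSat_iff_of_perm hperm, paramSat_cons, ← and_assoc]
        exact and_congr_left' (by simp [Cmp.holds_and_holds_iff, hm])
  · refine .inr ⟨(t, c, t') :: par, ⟨?_, ?_⟩, fun f => Iff.rfl⟩
    · exact List.forall_mem_cons.2 ⟨⟨ha.1, ha.2, hdiag⟩, hpar.1⟩
    · refine List.pairwise_cons.2 ⟨?_, hpar.2⟩
      simp only [List.mem_map]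
      rintro _ ⟨b, hb, rfl⟩ h
      exact hkey ⟨b, hb, (Prod.ext_iff.1 h).1.symm, (Prod.ext_iff.1 h).2.symm⟩

theorem exists_isNormalOver_or_unsat {T : Set α} (par : List (α × Cmp × α))
    (hpar : ∀ a ∈ par, a.1 ∈ T ∧ a.2.2 ∈ T) :
    (∀ f, ¬ ParamSat f par) ∨
      ∃ par', IsNormalOver T par' ∧ ∀ f, ParamSat f par' ↔ ParamSat f par := by
  induction par with
  | nil => exact .inr ⟨[], ⟨by simp, by simp⟩, fun _ => Iff.rfl⟩
  | cons a par ih =>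
    rw [List.forall_mem_cons] at hpar
    rcases ih hpar.2 with hunsat | ⟨par', hn, hsat⟩
    · exact .inl fun f h => hunsat f (paramSat_cons.1 h).2
    · have hsat_cons (f : α → ℝ) : ParamSat f (a :: par') ↔ ParamSat f (a :: par) := by
        rw [paramSat_cons, paramSat_cons, hsat]
      rcases hn.exists_cons_or_unsat hpar.1 with hunsat | ⟨par'', hn', hsat'⟩
      · exact .inl fun f h => hunsat f ((hsat_cons f).2 h)
      · exact .inr ⟨par'', hn', fun f => (hsat' f).trans (hsat_cons f)⟩

end Normalize

section Zones

theorem Zone1.mem_elapse {P : Type} {Z : Zone1 P} {x : ℝ} {ρ : P → ℝ} :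
    (x, ρ) ∈ Z.elapse ↔ ∃ y ≤ x, (y, ρ) ∈ Z := by
  constructor
  · rintro ⟨y, d, hd, hy, rfl⟩
    exact ⟨y, by linarith, hy⟩
  · rintro ⟨y, hy, hyZ⟩
    exact ⟨y, x - y, by linarith, hyZ, by ring⟩

variable {P : Type} [Fintype P]

theorem zeroTerm_eval (ρ : P → ℝ) : (zeroTerm P).eval ρ = 0 := by
  simp [zeroTerm, LinTerm.eval]

def conjZone (clk : List (LinTerm P × Cmp)) (par : List (LinTerm P × Cmp × LinTerm P)) :
    Zone1 P :=
  {xρ | ClockSat (LinTerm.eval · xρ.2) xρ.1 clk ∧ ParamSat (LinTerm.eval · xρ.2) par}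

theorem mem_conjZone {clk : List (LinTerm P × Cmp)} {par : List (LinTerm P × Cmp × LinTerm P)}
    {x : ℝ} {ρ : P → ℝ} :
    (x, ρ) ∈ conjZone clk par ↔
      ClockSat (LinTerm.eval · ρ) x clk ∧ ParamSat (LinTerm.eval · ρ) par :=
  Iff.rfl

def IsSymbolicOver (T : Set (LinTerm P)) (Z : Zone1 P) : Prop :=
  ∃ clk par, (∀ a ∈ clk, a.1 ∈ T) ∧ (∀ a ∈ par, a.1 ∈ T ∧ a.2.2 ∈ T) ∧
    conjZone clk par = Z

variable {T : Set (LinTerm P)}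

theorem IsSymbolicOver.inter {Z₁ Z₂ : Zone1 P} (h₁ : IsSymbolicOver T Z₁)
    (h₂ : IsSymbolicOver T Z₂) : IsSymbolicOver T (Z₁ ∩ Z₂) := by
  obtain ⟨clk₁, par₁, hclk₁, hpar₁, rfl⟩ := h₁
  obtain ⟨clk₂, par₂, hclk₂, hpar₂, rfl⟩ := h₂
  refine ⟨clk₁ ++ clk₂, par₁ ++ par₂, List.forall_mem_append.2 ⟨hclk₁, hclk₂⟩,
    List.forall_mem_append.2 ⟨hpar₁, hpar₂⟩, ?_⟩
  ext ⟨x, ρ⟩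
  simp only [Set.mem_inter_iff, mem_conjZone, clockSat_append, paramSat_append]
  tauto

theorem isSymbolicOver_ocZone {g : OCConstraint P} (hg : ∀ a ∈ g, a.2 ∈ T) :
    IsSymbolicOver T (ocZone g) := by
  refine ⟨g.map fun a => (a.2, a.1.flip), [], List.forall_mem_map.2 hg, by simp, ?_⟩
  ext ⟨x, ρ⟩
  simp only [mem_conjZone, ClockSat, ParamSat, List.forall_mem_map, Cmp.holds_flip]
  simp [ocZone, OCConstraint.sat]

theorem isSymbolicOver_clock_eq_zero (h0 : zeroTerm P ∈ T) :
    IsSymbolicOver T {xρ | xρ.1 = 0} := by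
  refine ⟨[(zeroTerm P, .eq)], [], by simpa using h0, by simp, ?_⟩
  ext ⟨x, ρ⟩
  simp [mem_conjZone, ClockSat, ParamSat, Cmp.holds, zeroTerm_eval, eq_comm]

theorem IsSymbolicOver.elapse {Z : Zone1 P} (h : IsSymbolicOver T Z) :
    IsSymbolicOver T Z.elapse := by
  obtain ⟨clk, par, hclk, hpar, rfl⟩ := h
  refine ⟨elapseAtoms clk, par ++ eliminationAtoms clk, elapseAtoms_terms_mem hclk,
    List.forall_mem_append.2 ⟨hpar, eliminationAtoms_terms_mem hclk⟩, ?_⟩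
  ext ⟨x, ρ⟩
  rw [Zone1.mem_elapse]
  simp only [mem_conjZone, paramSat_append, ← and_assoc, exists_and_right, exists_le_clockSat_iff]
  tauto

theorem IsSymbolicOver.reset (h0 : zeroTerm P ∈ T) {Z : Zone1 P} (h : IsSymbolicOver T Z)
    (b : Bool) : IsSymbolicOver T (Z.reset b) := by
  cases b
  · exact h
  obtain ⟨clk, par, hclk, hpar, rfl⟩ := h
  refine ⟨[(zeroTerm P, .eq)], par ++ eliminationAtoms clk, by simpa using h0,
    List.forall_mem_append.2 ⟨hpar, eliminationAtoms_terms_mem hclk⟩, ?_⟩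
  ext ⟨x, ρ⟩
  change _ ↔ ∃ y, (y, ρ) ∈ conjZone clk par ∧ x = 0
  simp only [mem_conjZone, paramSat_append, and_comm (b := x = 0), exists_and_left,
    exists_and_right, exists_clockSat_iff]
  simp [ClockSat, Cmp.holds, zeroTerm_eval, eq_comm, and_comm]

theorem in1CSC_empty {σ L : Type} (A : OCPTA σ L P) : In1CSC A ∅ := by
  refine ⟨[(zeroTerm P, .lt), (zeroTerm P, .gt)], [], by simp, by simp, by simp, ?_⟩
  ext ⟨x, ρ⟩
  simpa [Cmp.holds, zeroTerm_eval] using fun h : 0 < x => h.le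

theorem IsSymbolicOver.in1CSC {σ L : Type} {A : OCPTA σ L P} {Z : Zone1 P}
    (h : IsSymbolicOver (insert (zeroTerm P) A.terms) Z) : In1CSC A Z := by
  obtain ⟨clk, par, hclk, hpar, rfl⟩ := h
  rcases exists_isNormalOver_or_unsat par hpar with
    hunsat | ⟨par', ⟨hterms, hpairwise⟩, hsat⟩
  · convert in1CSC_empty A
    exact Set.eq_empty_of_forall_notMem fun xρ h => hunsat _ h.2
  · refine ⟨clk, par', hclk, hterms, hpairwise, ?_⟩
    ext ⟨x, ρ⟩
    exact and_congr_right' (hsat _).symm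

end Zones

/-- **Reachable symbolic states of a 1cPTA are 1-clock symbolic constraints**
(Lemma 25). Every reachable symbolic state `(l, C)` of an extended 1-clock PTA
`A` satisfies `C ∈ 1CSC(A)`. -/
theorem reachable_symbolic_states_in_1CSC {σ L P : Type} [Fintype P]
    (A : OCPTA σ L P) {s : L × Zone1 P} (hs : OCReach A s) :
    In1CSC A s.2 := by
  set T := insert (zeroTerm P) A.terms
  suffices IsSymbolicOver T s.2 from this.in1CSC
  have h0 : zeroTerm P ∈ T := Set.mem_insert _ _
  have hinv (l : L) : IsSymbolicOver T (ocZone (A.inv l)) :=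
    isSymbolicOver_ocZone fun a ha => Set.mem_insert_of_mem _ (.inl ⟨l, a, ha, rfl⟩)
  induction hs with
  | init => exact (isSymbolicOver_clock_eq_zero h0).elapse.inter (hinv _)
  | succ _ hstep ih =>
    obtain ⟨e, he, -, -, hzone, -⟩ := hstep
    rw [hzone]
    have hguard : IsSymbolicOver T (ocZone e.guard) :=
      isSymbolicOver_ocZone fun a ha => Set.mem_insert_of_mem _ (.inr ⟨e, he, a, ha, rfl⟩)
    exact ((ih.inter hguard).reset h0 e.reset).elapse.inter (hinv _)

end PTAPaper
end
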